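/- Let n ≥ 2 be an integer, m > 0, and r ≥ 0 an even integer. Set g(x) = (-1)^{n+1} ψ₂⁽ⁿ⁾(x). Then for all x₁, x₂ ∈ (0,m) with x₁ + x₂ ≤ m, g^{(r)}(x₁) + g^{(r)}(x₂) − g^{(r)}(x₁+x₂) ≥ 2 g^{(r)}(m/2) − g^{(r)}(m). -/

import Mathlib

/-!
On `(0, ∞)` the function `(-1)^(n+1) ψ₂⁽ⁿ⁾` is `n!` times `∑ₖ (1+k)/(x+k)^(n+1)`, a series that may be
differentiated termwise; its `r`-th derivative is `(-1)^r (n+1)(n+2)⋯(n+r)` times the series with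
exponent `n+1+r`. For even `r` this is a nonnegative multiple of a sum of convex functions, hence
convex. For a convex `f`, writing `x₁ + x₂` and `m - x₁` as symmetric convex combinations of `x₂`
and `m` gives `f (x₁+x₂) + f (m-x₁) ≤ f x₂ + f m`, and midpoint convexity gives
`2 f (m/2) ≤ f x₁ + f (m-x₁)`; adding the two is the claim.
-/

noncomputable def psi2 (n : ℕ) (x : ℝ) : ℝ :=
  (-1) ^ (n + 1) * (n.factorial : ℝ) * ∑' k : ℕ, (1 + (k : ℝ)) / (x + k) ^ (n + 1)

open Set

theorem ConvexOn.map_add_map_le_of_mem_segment {E : Type*} [AddCommGroup E] [Module ℝ E]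
    {s : Set E} {f : E → ℝ} (hf : ConvexOn ℝ s f) {a b c d : E} (ha : a ∈ s) (hd : d ∈ s)
    (hb : b ∈ segment ℝ a d) (habcd : a + d = b + c) : f b + f c ≤ f a + f d := by
  obtain ⟨θ, η, hθ, hη, hθη, rfl⟩ := hb
  have hc : c = η • a + θ • d := by
    rw [← add_right_inj (θ • a + η • d), ← habcd]
    nth_rewrite 1 [← one_smul ℝ a, ← one_smul ℝ d]
    rw [← hθη]
    module
  have hfb := hf.2 ha hd hθ hη hθη
  have hfc := hf.2 ha hd hη hθ (by rw [add_comm, hθη])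
  rw [← hc] at hfc
  simp only [smul_eq_mul] at hfb hfc
  linear_combination hfb + hfc + (f a + f d) * hθη

theorem ConvexOn.two_mul_map_half_sub_map_le {s : Set ℝ} {f : ℝ → ℝ} (hf : ConvexOn ℝ s f)
    {m x₁ x₂ : ℝ} (hx₁ : x₁ ∈ s) (hx₂ : x₂ ∈ s) (hm : m ∈ s) (hx₁_nonneg : 0 ≤ x₁)
    (hsum : x₁ + x₂ ≤ m) : 2 * f (m / 2) - f m ≤ f x₁ + f x₂ - f (x₁ + x₂) := by
  have hseg : ∀ {y}, x₂ ≤ y → y ≤ m → y ∈ segment ℝ x₂ m := fun h₁ h₂ => by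
    rw [segment_eq_uIcc]; exact Icc_subset_uIcc ⟨h₁, h₂⟩
  have hx₁' : m - x₁ ∈ s := hf.1.segment_subset hx₂ hm (hseg (by linarith) (by linarith))
  have h_shift : f (x₁ + x₂) + f (m - x₁) ≤ f x₂ + f m :=
    hf.map_add_map_le_of_mem_segment hx₂ hm (hseg (by linarith) hsum) (by ring)
  have h_mid : f (m / 2) + f (m / 2) ≤ f x₁ + f (m - x₁) :=
    hf.map_add_map_le_of_mem_segment hx₁ hx₁' (by
      rw [segment_eq_uIcc, mem_uIcc]; rcases le_total x₁ (m / 2) with h | h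
      · left; constructor <;> linarith
      · right; constructor <;> linarith) (by ring)
  linarith

theorem ConvexOn.tsum {E ι : Type*} [AddCommGroup E] [Module ℝ E] {s : Set E}
    {f : ι → E → ℝ} (hs : Convex ℝ s) (hf : ∀ i, ConvexOn ℝ s (f i))
    (hsum : ∀ x ∈ s, Summable fun i => f i x) : ConvexOn ℝ s fun x => ∑' i, f i x := by
  refine ⟨hs, fun x hx y hy a b ha hb hab => ?_⟩
  simp only [smul_eq_mul]
  rw [← tsum_mul_left, ← tsum_mul_left, ← ((hsum x hx).mul_left a).tsum_add
    ((hsum y hy).mul_left b)]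
  exact (hsum _ (hs hx hy ha hb hab)).tsum_le_tsum (fun i => (hf i).2 hx hy ha hb hab)
    (((hsum x hx).mul_left a).add ((hsum y hy).mul_left b))

noncomputable def psi2Series (p : ℕ) (x : ℝ) : ℝ := ∑' k : ℕ, (1 + (k : ℝ)) / (x + k) ^ p

theorem neg_one_pow_mul_psi2 (n : ℕ) (x : ℝ) :
    (-1) ^ (n + 1) * psi2 n x = n.factorial * psi2Series (n + 1) x := by
  rw [psi2, psi2Series, ← mul_assoc, ← mul_assoc, ← mul_pow]
  norm_num

theorem summable_one_div_one_add_sq : Summable fun k : ℕ => 1 / (1 + (k : ℝ)) ^ 2 := by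
  refine ((summable_nat_add_iff 1).mpr (Real.summable_one_div_nat_pow.mpr one_lt_two)).congr
    fun k => ?_
  push_cast
  ring_nf

theorem psi2Series_term_le {p : ℕ} (hp : 3 ≤ p) {c y : ℝ} (hc₀ : 0 < c) (hc₁ : c ≤ 1)
    (hcy : c ≤ y) (k : ℕ) :
    (1 + (k : ℝ)) / (y + k) ^ p ≤ 1 / c ^ p * (1 / (1 + (k : ℝ)) ^ 2) := by
  have hk : (1 : ℝ) ≤ 1 + k := le_add_of_nonneg_right k.cast_nonneg
  have hden : c ^ p * (1 + (k : ℝ)) ^ 3 ≤ (y + k) ^ p :=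
    calc c ^ p * (1 + (k : ℝ)) ^ 3 ≤ c ^ p * (1 + k) ^ p := by gcongr
      _ = (c * (1 + k)) ^ p := (mul_pow _ _ _).symm
      _ ≤ (y + k) ^ p := by gcongr; nlinarith
  calc (1 + (k : ℝ)) / (y + k) ^ p ≤ (1 + k) / (c ^ p * (1 + k) ^ 3) := by gcongr
    _ = 1 / c ^ p * (1 / (1 + (k : ℝ)) ^ 2) := by field_simp

theorem summable_psi2Series {p : ℕ} (hp : 3 ≤ p) {x : ℝ} (hx : 0 < x) :
    Summable fun k : ℕ => (1 + (k : ℝ)) / (x + k) ^ p :=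
  summable_one_div_one_add_sq.mul_left _ |>.of_nonneg_of_le (fun k => by positivity)
    (psi2Series_term_le hp (lt_min hx one_pos) (min_le_right _ _) (min_le_left _ _))

theorem hasDerivAt_psi2Series_term (p k : ℕ) {x : ℝ} (hx : 0 < x) :
    HasDerivAt (fun y : ℝ => (1 + (k : ℝ)) / (y + k) ^ p)
      (-p * ((1 + (k : ℝ)) / (x + k) ^ (p + 1))) x := by
  have hxk : x + (k : ℝ) ≠ 0 := by positivity
  have h := ((hasDerivAt_zpow (-(p : ℤ)) (x + k) (Or.inl hxk)).comp_add_const x k).const_mul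
    (1 + (k : ℝ))
  have hexp : -(p : ℤ) - 1 = -((p + 1 : ℕ) : ℤ) := by push_cast; ring
  simp only [hexp, zpow_neg, zpow_natCast, Int.cast_neg, Int.cast_natCast] at h
  simp only [div_eq_mul_inv]
  exact h.congr_deriv (by ring)

theorem hasDerivAt_psi2Series {p : ℕ} (hp : 3 ≤ p) {x : ℝ} (hx : 0 < x) :
    HasDerivAt (psi2Series p) (-p * psi2Series (p + 1) x) x := by
  set c := min (x / 2) 1
  have hc₀ : 0 < c := lt_min (by linarith) one_pos
  have hbound : ∀ (k : ℕ), ∀ y ∈ Ioi (x / 2),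
      ‖-(p : ℝ) * ((1 + (k : ℝ)) / (y + k) ^ (p + 1))‖
        ≤ p * (1 / c ^ (p + 1) * (1 / (1 + (k : ℝ)) ^ 2)) := fun k y hy => by
    have hy₀ : 0 < y := (half_pos hx).trans hy
    rw [norm_mul, norm_neg, Real.norm_natCast, Real.norm_of_nonneg (by positivity)]
    gcongr
    exact psi2Series_term_le (by omega) hc₀ (min_le_right _ _)
      ((min_le_left _ _).trans hy.le) k
  have hx_mem : x ∈ Ioi (x / 2) := half_lt_self hx
  have h := hasDerivAt_tsum_of_isPreconnected
    ((summable_one_div_one_add_sq.mul_left _).mul_left _) isOpen_Ioi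
    (convex_Ioi _).isPreconnected
    (fun k y hy => hasDerivAt_psi2Series_term p k ((half_pos hx).trans hy))
    hbound hx_mem (summable_psi2Series hp hx) hx_mem
  rwa [tsum_mul_left] at h

theorem iteratedDeriv_const_mul_psi2Series {p : ℕ} (hp : 3 ≤ p) (a : ℝ) (r : ℕ) {x : ℝ}
    (hx : 0 < x) : iteratedDeriv r (fun y => a * psi2Series p y) x
      = a * (-1) ^ r * p.ascFactorial r * psi2Series (p + r) x := by
  induction r generalizing x with
  | zero => simp
  | succ r ih =>
    have hev : iteratedDeriv r (fun y => a * psi2Series p y)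
        =ᶠ[nhds x] fun y => a * (-1) ^ r * p.ascFactorial r * psi2Series (p + r) y :=
      eventually_gt_nhds hx |>.mono fun y hy => ih hy
    rw [iteratedDeriv_succ, hev.deriv_eq,
      ((hasDerivAt_psi2Series (by omega) hx).const_mul _).deriv, Nat.ascFactorial_succ,
      ← add_assoc]
    push_cast
    ring

theorem convexOn_psi2Series_term (p k : ℕ) :
    ConvexOn ℝ (Ioi 0) fun x : ℝ => (1 + (k : ℝ)) / (x + k) ^ p := by
  have h := ((convexOn_zpow (𝕜 := ℝ) (-(p : ℤ))).translate_left (k : ℝ)).subset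
    (fun x (hx : 0 < x) => show 0 < (k : ℝ) + x by positivity) (convex_Ioi 0)
  refine (h.smul (by positivity : (0 : ℝ) ≤ 1 + k)).congr fun x _ => ?_
  simp [div_eq_mul_inv]

theorem convexOn_psi2Series {p : ℕ} (hp : 3 ≤ p) : ConvexOn ℝ (Ioi 0) (psi2Series p) :=
  ConvexOn.tsum (convex_Ioi 0) (convexOn_psi2Series_term p) fun _ hx => summable_psi2Series hp hx

theorem stmt_19 (n : ℕ) (hn : 2 ≤ n) (m : ℝ) (hm : 0 < m) (r : ℕ) (hr : Even r)
    (x₁ x₂ : ℝ) (hx₁ : x₁ ∈ Set.Ioo 0 m) (hx₂ : x₂ ∈ Set.Ioo 0 m) (hsum : x₁ + x₂ ≤ m) :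
    2 * iteratedDeriv r (fun y => (-1) ^ (n + 1) * psi2 n y) (m / 2) -
      iteratedDeriv r (fun y => (-1) ^ (n + 1) * psi2 n y) m ≤
    iteratedDeriv r (fun y => (-1) ^ (n + 1) * psi2 n y) x₁ +
      iteratedDeriv r (fun y => (-1) ^ (n + 1) * psi2 n y) x₂ -
      iteratedDeriv r (fun y => (-1) ^ (n + 1) * psi2 n y) (x₁ + x₂) := by
  simp only [neg_one_pow_mul_psi2]
  have hcoef : (0 : ℝ) ≤ n.factorial * (-1) ^ r * (n + 1).ascFactorial r := by
    rw [hr.neg_one_pow]; positivity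
  have hconv : ConvexOn ℝ (Ioi 0)
      (iteratedDeriv r fun y => (n.factorial : ℝ) * psi2Series (n + 1) y) :=
    ((convexOn_psi2Series (by omega)).smul hcoef).congr fun x hx =>
      (iteratedDeriv_const_mul_psi2Series (by omega) _ r hx).symm
  exact hconv.two_mul_map_half_sub_map_le hx₁.1 hx₂.1 hm hx₁.1.le hsum
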